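/- arXiv:1212.3274 — 2 statements merged into one kernel-verified Lean document; each statement's English description precedes it below -/
import Mathlib

section
/- Let W be a group with finite generating set S = S⁻¹ whose geodesic normal form Red(W) is regular and satisfies the k-fellow-traveler property for some k. Then the set L = {(α,β) ∈ Red(W) × Red(W) : ᾱ = β̄} of pairs of geodesic words representing the same group element is a regular language of pairs. -/
/-!
Two geodesics with the same endpoint are `k`-fellow-travelers, so while such a pair is read
synchronously the difference `ᾱᵢ⁻¹ β̄ᵢ` of the two prefixes stays in the finite ball of radius `k`
(symmetry of `S` makes every such difference the value of a word, so the ball is just the image of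
the words of length at most `k`). Hence `L` is the intersection of four regular languages: the
well-padded pairs, the pairs whose first resp. second track lies in `Red(W)`, and the pairs along
which the automaton tracking `ᾱᵢ⁻¹ β̄ᵢ` never leaves the ball and ends at `1`. The last one is regular
because an automaton, even with infinitely many states, whose runs are confined to a finite set of
states can be cut down to a finite one.
-/

namespace Stmt4

variable {W : Type*} [Group W]

/-- The element of `W` represented by a word over the generating set `S`. -/
def toElem (S : Finset W) (α : List {x // x ∈ S}) : W := (α.map Subtype.val).prod

/-- The word length of `w` with respect to `S`. -/
noncomputable def wlen (S : Finset W) (w : W) : ℕ :=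
  sInf {n | ∃ α : List {x // x ∈ S}, toElem S α = w ∧ α.length = n}

/-- The geodesic normal form: words whose length equals the word length of their image. -/
def Red (S : Finset W) : Language {x // x ∈ S} :=
  {α | α.length = wlen S (toElem S α)}

/-- The word-metric distance in the Cayley graph. -/
noncomputable def dS (S : Finset W) (u v : W) : ℕ := wlen S (u⁻¹ * v)

/-- Two words are (synchronous) `k`-fellow-travelers if corresponding prefixes stay
within distance `k` (prefixes beyond a word's length are the whole word). -/
def FellowTravel (S : Finset W) (k : ℕ) (α β : List {x // x ∈ S}) : Prop :=
  ∀ i : ℕ, dS S (toElem S (α.take i)) (toElem S (β.take i)) ≤ k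

/-- Padded encoding of a pair of words over the product alphabet. -/
def padPair {A : Type*} (α β : List A) : List (Option A × Option A) :=
  (List.range (max α.length β.length)).map fun i => (α[i]?, β[i]?)

end Stmt4

namespace DFA

variable {α α' σ : Type*}

def filterComap (f : α' → Option α) (M : DFA α σ) : DFA α' σ where
  step s a := (f a).elim s (M.step s)
  start := M.start
  accept := M.accept

theorem evalFrom_filterComap (f : α' → Option α) (M : DFA α σ) (s : σ) (w : List α') :
    (M.filterComap f).evalFrom s w = M.evalFrom s (w.filterMap f) := by
  induction w generalizing s with
  | nil => rfl
  | cons a w ih =>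
    rw [evalFrom_cons, ih]
    cases h : f a <;> simp [filterComap, h]

theorem accepts_filterComap (f : α' → Option α) (M : DFA α σ) :
    (M.filterComap f).accepts = List.filterMap f ⁻¹' M.accepts := by
  ext w
  simp only [mem_accepts, eval, evalFrom_filterComap]
  rfl

def acceptsWithin (M : DFA α σ) (B : Set σ) : Language α :=
  {w | (∀ i, M.eval (w.take i) ∈ B) ∧ w ∈ M.accepts}

open Classical in
noncomputable def restrict (M : DFA α σ) (B : Set σ) : DFA α (Option B) where
  step s a := s.bind fun b => if h : M.step b a ∈ B then some ⟨_, h⟩ else none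
  start := if h : M.start ∈ B then some ⟨_, h⟩ else none
  accept := {s | ∃ b : B, s = some b ∧ (b : σ) ∈ M.accept}

variable {M : DFA α σ} {B : Set σ}

theorem evalFrom_restrict_none (w : List α) : (M.restrict B).evalFrom none w = none := by
  induction w with
  | nil => rfl
  | cons a w ih => exact ih

theorem mem_acceptsFrom_restrict (b : B) (w : List α) :
    w ∈ (M.restrict B).acceptsFrom (some b) ↔
      (∀ i, M.evalFrom b (w.take i) ∈ B) ∧ w ∈ M.acceptsFrom b := by
  induction w generalizing b with
  | nil => simp [mem_acceptsFrom, restrict, b.2]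
  | cons a w ih =>
    rw [← Nat.and_forall_add_one]
    simp only [List.take_zero, evalFrom_nil, b.2, List.take_succ_cons, evalFrom_cons, true_and]
    by_cases h : M.step b a ∈ B
    · have hstep : (M.restrict B).step (some b) a = some ⟨_, h⟩ := by simp [restrict, h]
      simpa only [mem_acceptsFrom, evalFrom_cons, hstep] using ih ⟨_, h⟩
    · have hstep : (M.restrict B).step (some b) a = none := by simp [restrict, h]
      simp only [mem_acceptsFrom, evalFrom_cons, hstep, evalFrom_restrict_none]
      exact iff_of_false (by simp [restrict]) fun hw => h (hw.1 0)

theorem accepts_restrict : (M.restrict B).accepts = M.acceptsWithin B := by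
  ext w
  by_cases h : M.start ∈ B
  · have hstart : (M.restrict B).start = some ⟨_, h⟩ := by simp [restrict, h]
    rw [accepts, hstart, mem_acceptsFrom_restrict]
    rfl
  · have hstart : (M.restrict B).start = none := by simp [restrict, h]
    rw [accepts, hstart, mem_acceptsFrom, evalFrom_restrict_none]
    exact iff_of_false (by simp [restrict]) fun hw => h (hw.1 0)

theorem isRegular_acceptsWithin (hB : B.Finite) :
    (M.acceptsWithin B).IsRegular := by
  have := hB.fintype
  exact Language.isRegular_iff.mpr ⟨_, inferInstance, M.restrict B, accepts_restrict⟩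

end DFA

theorem Language.IsRegular.preimage_filterMap {α α' : Type*} {L : Language α} (hL : L.IsRegular)
    (f : α' → Option α) : Language.IsRegular (List.filterMap f ⁻¹' L : Set (List α')) := by
  obtain ⟨σ, _, M, rfl⟩ := hL
  exact ⟨σ, inferInstance, M.filterComap f, M.accepts_filterComap f⟩

namespace Stmt4

section Padding

variable {A : Type*}

theorem padPair_eq_zipWithAll (α β : List A) : padPair α β = List.zipWithAll Prod.mk α β := by
  refine List.ext_getElem? fun i => ?_
  rw [List.getElem?_zipWithAll, padPair, List.getElem?_map]
  by_cases h : i < max α.length β.length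
  · rw [List.getElem?_range h]
    rcases lt_max_iff.mp h with h | h <;> simp [h]
  · simp_all

@[simp] theorem padPair_cons_cons (a b : A) (α β : List A) :
    padPair (a :: α) (b :: β) = (some a, some b) :: padPair α β := by
  simp [padPair_eq_zipWithAll]

@[simp] theorem padPair_nil_left (β : List A) : padPair [] β = β.map fun b => (none, some b) := by
  simp [padPair_eq_zipWithAll]

@[simp] theorem padPair_nil_right (α : List A) : padPair α [] = α.map fun a => (some a, none) := by
  simp [padPair_eq_zipWithAll]

@[simp] theorem filterMap_fst_padPair (α β : List A) : (padPair α β).filterMap Prod.fst = α := by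
  induction α generalizing β with
  | nil => simp
  | cons a α ih => cases β <;> simp [ih, List.filterMap_map]

@[simp] theorem filterMap_snd_padPair (α β : List A) : (padPair α β).filterMap Prod.snd = β := by
  induction α generalizing β with
  | nil => simp [List.filterMap_map]
  | cons a α ih => cases β <;> simp [ih, List.filterMap_map]

theorem take_padPair (i : ℕ) (α β : List A) :
    (padPair α β).take i = padPair (α.take i) (β.take i) := by
  induction i generalizing α β with
  | zero => simp
  | succ i ih => rcases α with _ | ⟨a, α⟩ <;> rcases β with _ | ⟨b, β⟩ <;> simp [ih, List.map_take]

def paddedFrom (ea eb : Bool) : Language (Option A × Option A) :=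
  {w | ∃ α β, w = padPair α β ∧ (ea → α = []) ∧ (eb → β = [])}

theorem cons_mem_paddedFrom {ea eb : Bool} {a? b? : Option A} {w : List (Option A × Option A)} :
    (a?, b?) :: w ∈ paddedFrom ea eb ↔
      ((a?.isSome || b?.isSome) && (!ea || a?.isNone) && (!eb || b?.isNone)) ∧
        w ∈ paddedFrom (ea || a?.isNone) (eb || b?.isNone) := by
  constructor
  · rintro ⟨α, β, hw, hα, hβ⟩
    rcases α with _ | ⟨a, α⟩ <;> rcases β with _ | ⟨b, β⟩ <;>
      simp only [padPair_cons_cons, padPair_nil_left, padPair_nil_right, List.map_nil,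
        List.map_cons, List.cons.injEq, Prod.mk.injEq, reduceCtorEq] at hw
    · obtain ⟨⟨rfl, rfl⟩, rfl⟩ := hw
      refine ⟨?_, [], β, by simp, by simp, ?_⟩ <;> cases eb <;> simp_all
    · obtain ⟨⟨rfl, rfl⟩, rfl⟩ := hw
      refine ⟨?_, α, [], by simp, ?_, by simp⟩ <;> cases ea <;> simp_all
    · obtain ⟨⟨rfl, rfl⟩, rfl⟩ := hw
      refine ⟨?_, α, β, rfl, ?_⟩ <;> cases ea <;> cases eb <;> simp_all
  · rintro ⟨hok, α, β, rfl, hα, hβ⟩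
    refine ⟨a?.toList ++ α, b?.toList ++ β, ?_, ?_, ?_⟩ <;>
      cases a? <;> cases b? <;> cases ea <;> cases eb <;> simp_all

variable (A) in
/-- The state `some (ea, eb)` records which of the two words has already ended; `none` is a
dead state. -/
def padDFA : DFA (Option A × Option A) (Option (Bool × Bool)) where
  step s c := s.bind fun (ea, eb) =>
    if (c.1.isSome || c.2.isSome) && (!ea || c.1.isNone) && (!eb || c.2.isNone) then
      some (ea || c.1.isNone, eb || c.2.isNone)
    else none
  start := some (false, false)
  accept := {s | s.isSome}

theorem evalFrom_padDFA_none (w : List (Option A × Option A)) :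
    (padDFA A).evalFrom none w = none := by
  induction w with
  | nil => rfl
  | cons c w ih => exact ih

theorem acceptsFrom_padDFA (ea eb : Bool) :
    (padDFA A).acceptsFrom (some (ea, eb)) = paddedFrom ea eb := by
  ext w
  induction w generalizing ea eb with
  | nil => exact iff_of_true rfl ⟨[], [], by simp⟩
  | cons c w ih =>
    obtain ⟨a?, b?⟩ := c
    rw [cons_mem_paddedFrom, DFA.mem_acceptsFrom, DFA.evalFrom_cons]
    by_cases hok : ((a?.isSome || b?.isSome) && (!ea || a?.isNone) && (!eb || b?.isNone)) = true
    · simp only [padDFA, Option.bind_some, hok, if_true, true_and]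
      exact ih _ _
    · have hstep : (padDFA A).step (some (ea, eb)) (a?, b?) = none := if_neg hok
      rw [hstep, evalFrom_padDFA_none]
      exact iff_of_false (by simp [padDFA]) fun h => hok h.1

theorem isRegular_setOf_padPair :
    Language.IsRegular ({w | ∃ α β, w = padPair α β} : Language (Option A × Option A)) := by
  refine ⟨_, inferInstance, padDFA A, ?_⟩
  rw [DFA.accepts, show (padDFA A).start = some (false, false) from rfl, acceptsFrom_padDFA]
  ext w
  simp [paddedFrom]

end Padding

variable {W : Type*} [Group W]

section WordMetric

variable (S : Finset W)

@[simp] theorem toElem_nil : toElem S [] = 1 := rfl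

@[simp] theorem toElem_cons (a : {x // x ∈ S}) (α : List {x // x ∈ S}) :
    toElem S (a :: α) = a * toElem S α := rfl

@[simp] theorem toElem_append (α β : List {x // x ∈ S}) :
    toElem S (α ++ β) = toElem S α * toElem S β := by
  simp [toElem]

theorem wlen_toElem_le (α : List {x // x ∈ S}) : wlen S (toElem S α) ≤ α.length :=
  Nat.sInf_le ⟨α, rfl, rfl⟩

theorem exists_length_eq_wlen (α : List {x // x ∈ S}) :
    ∃ γ, toElem S γ = toElem S α ∧ γ.length = wlen S (toElem S α) :=
  Nat.sInf_mem (s := {n | ∃ γ, toElem S γ = toElem S α ∧ γ.length = n}) ⟨α.length, α, rfl, rfl⟩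

theorem exists_toElem_eq_inv (hsym : ∀ s ∈ S, s⁻¹ ∈ S) (α : List {x // x ∈ S}) :
    ∃ γ, toElem S γ = (toElem S α)⁻¹ := by
  induction α with
  | nil => exact ⟨[], by simp⟩
  | cons a α ih =>
    obtain ⟨γ, hγ⟩ := ih
    exact ⟨γ ++ [⟨a⁻¹, hsym a a.2⟩], by simp [hγ]⟩

def ball (k : ℕ) : Set W := toElem S '' {γ | γ.length ≤ k}

theorem finite_ball (k : ℕ) : (ball S k).Finite :=
  (List.finite_length_le _ k).image _

theorem toElem_mem_ball_iff {k : ℕ} (α : List {x // x ∈ S}) :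
    toElem S α ∈ ball S k ↔ wlen S (toElem S α) ≤ k := by
  constructor
  · rintro ⟨γ, hγ, hγα⟩
    exact hγα ▸ (wlen_toElem_le S γ).trans hγ
  · intro h
    obtain ⟨γ, hγα, hγ⟩ := exists_length_eq_wlen S α
    exact ⟨γ, hγ.trans_le h, hγα⟩

def diffDFA : DFA (Option {x // x ∈ S} × Option {x // x ∈ S}) W where
  step g c := (toElem S c.1.toList)⁻¹ * g * toElem S c.2.toList
  start := 1
  accept := {1}

theorem evalFrom_diffDFA (g : W) (w : List (Option {x // x ∈ S} × Option {x // x ∈ S})) :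
    (diffDFA S).evalFrom g w =
      (toElem S (w.filterMap Prod.fst))⁻¹ * g * toElem S (w.filterMap Prod.snd) := by
  induction w generalizing g with
  | nil => simp
  | cons c w ih =>
    rw [DFA.evalFrom_cons, ih]
    obtain ⟨a?, b?⟩ := c
    cases a? <;> cases b? <;> simp [diffDFA, mul_assoc]

theorem eval_diffDFA_padPair (α β : List {x // x ∈ S}) :
    (diffDFA S).eval (padPair α β) = (toElem S α)⁻¹ * toElem S β := by
  change (diffDFA S).evalFrom 1 _ = _
  simp [evalFrom_diffDFA]

theorem fellowTravel_iff_eval_take_mem_ball (hsym : ∀ s ∈ S, s⁻¹ ∈ S) {k : ℕ}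
    {α β : List {x // x ∈ S}} :
    FellowTravel S k α β ↔ ∀ i, (diffDFA S).eval ((padPair α β).take i) ∈ ball S k := by
  refine forall_congr' fun i => ?_
  obtain ⟨γ, hγ⟩ := exists_toElem_eq_inv S hsym (α.take i)
  rw [take_padPair, eval_diffDFA_padPair, dS, ← hγ, ← toElem_append, toElem_mem_ball_iff]

def equalityPairs (K₁ K₂ : Language {x // x ∈ S}) :
    Language (Option {x // x ∈ S} × Option {x // x ∈ S}) :=
  {w | ∃ α ∈ K₁, ∃ β ∈ K₂, toElem S α = toElem S β ∧ w = padPair α β}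

theorem equalityPairs_eq_inf (hsym : ∀ s ∈ S, s⁻¹ ∈ S) (k : ℕ) {K₁ K₂ : Language {x // x ∈ S}}
    (hft : ∀ α ∈ K₁, ∀ β ∈ K₂, toElem S α = toElem S β → FellowTravel S k α β) :
    equalityPairs S K₁ K₂ =
      {w | ∃ α β, w = padPair α β} ⊓ List.filterMap Prod.fst ⁻¹' K₁ ⊓
        List.filterMap Prod.snd ⁻¹' K₂ ⊓ (diffDFA S).acceptsWithin (ball S k) := by
  ext w
  constructor
  · rintro ⟨α, hα, β, hβ, heq, rfl⟩
    refine ⟨⟨⟨⟨α, β, rfl⟩, ?_⟩, ?_⟩, ?_, ?_⟩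
    · show (padPair α β).filterMap Prod.fst ∈ K₁
      rwa [filterMap_fst_padPair]
    · show (padPair α β).filterMap Prod.snd ∈ K₂
      rwa [filterMap_snd_padPair]
    · exact (fellowTravel_iff_eval_take_mem_ball S hsym).mp (hft α hα β hβ heq)
    · show (diffDFA S).eval _ = 1
      rw [eval_diffDFA_padPair, heq, inv_mul_cancel]
  · rintro ⟨⟨⟨⟨α, β, rfl⟩, hα⟩, hβ⟩, -, hacc⟩
    change (padPair α β).filterMap Prod.fst ∈ K₁ at hα
    change (padPair α β).filterMap Prod.snd ∈ K₂ at hβ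
    rw [filterMap_fst_padPair] at hα
    rw [filterMap_snd_padPair] at hβ
    change (diffDFA S).eval _ = 1 at hacc
    rw [eval_diffDFA_padPair, inv_mul_eq_one] at hacc
    exact ⟨α, hα, β, hβ, hacc, rfl⟩

theorem isRegular_equalityPairs (hsym : ∀ s ∈ S, s⁻¹ ∈ S) (k : ℕ)
    {K₁ K₂ : Language {x // x ∈ S}} (h₁ : K₁.IsRegular) (h₂ : K₂.IsRegular)
    (hft : ∀ α ∈ K₁, ∀ β ∈ K₂, toElem S α = toElem S β → FellowTravel S k α β) :
    (equalityPairs S K₁ K₂).IsRegular := by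
  rw [equalityPairs_eq_inf S hsym k hft]
  exact ((isRegular_setOf_padPair.inf (h₁.preimage_filterMap _)).inf
    (h₂.preimage_filterMap _)).inf ((diffDFA S).isRegular_acceptsWithin (finite_ball S k))

end WordMetric

theorem equality_pairs_regular_general (S : Finset W)
    (hsym : ∀ s ∈ S, s⁻¹ ∈ S) (k : ℕ)
    (hreg : (Red S).IsRegular)
    (hft : ∀ α ∈ Red S, ∀ β ∈ Red S, ∀ t : W, (t ∈ S ∨ t = 1) →
      toElem S α = toElem S β * t → FellowTravel S k α β) :
    Language.IsRegular
      ({w | ∃ α ∈ Red S, ∃ β ∈ Red S, toElem S α = toElem S β ∧ w = padPair α β} :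
        Language (Option {x // x ∈ S} × Option {x // x ∈ S})) :=
  isRegular_equalityPairs S hsym k hreg hreg fun α hα β hβ heq =>
    hft α hα β hβ 1 (Or.inr rfl) (by rw [heq, mul_one])

/-- If `Red(W)` is regular and has the `k`-fellow-traveler property, then the set of pairs
of geodesic words representing the same group element is a regular language of pairs. -/
theorem equality_pairs_regular (S : Finset W)
    (hgen : Subgroup.closure (S : Set W) = ⊤)
    (hsym : ∀ s ∈ S, s⁻¹ ∈ S) (k : ℕ)
    (hreg : (Red S).IsRegular)
    (hft : ∀ α ∈ Red S, ∀ β ∈ Red S, ∀ t : W, (t ∈ S ∨ t = 1) →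
      toElem S α = toElem S β * t → FellowTravel S k α β) :
    Language.IsRegular
      ({w | ∃ α ∈ Red S, ∃ β ∈ Red S, toElem S α = toElem S β ∧ w = padPair α β} :
        Language (Option {x // x ∈ S} × Option {x // x ∈ S})) :=
  equality_pairs_regular_general S hsym k hreg hft

end Stmt4
end

section
/- Let W be a group with finite symmetric generating set S such that the language Red(W) of geodesic words is regular and has the k-fellow-traveler property for some k. For any fixed geodesic word μ, let X_μ = {w ∈ W : w = u·μ̄·v with l(w) = l(u)+l(μ̄)+l(v) for some u,v ∈ W}. Then the language Red(X_μ) of all geodesic words representing elements of X_μ is regular. -/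
/-! A geodesic word represents an element of `X_μ` exactly when some geodesic word `β` with the
same image contains `μ` as a factor. Two geodesics with the same image have the same length and,
by the fellow-traveler property, their prefixes of equal length stay within distance `k` of each
other. So a finite automaton can read `α` while guessing `β` letter by letter: it runs the
automaton of `Red(W)` on both words, checks that `μ` occurs in `β`, and remembers only the
current word difference, which ranges over the finite ball of radius `k`. -/

namespace Stmt5

variable {W : Type*} [Group W]

/-- The element of `W` represented by a word over the generating set `S`. -/
def toElem (S : Finset W) (α : List {x // x ∈ S}) : W := (α.map Subtype.val).prod

/-- The word length of `w` with respect to `S`. -/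
noncomputable def wlen (S : Finset W) (w : W) : ℕ :=
  sInf {n | ∃ α : List {x // x ∈ S}, toElem S α = w ∧ α.length = n}

/-- The geodesic normal form: words whose length equals the word length of their image. -/
def Red (S : Finset W) : Language {x // x ∈ S} :=
  {α | α.length = wlen S (toElem S α)}

/-- Word-metric distance. -/
noncomputable def dS (S : Finset W) (u v : W) : ℕ := wlen S (u⁻¹ * v)

/-- Synchronous `k`-fellow-traveling. -/
def FellowTravel (S : Finset W) (k : ℕ) (α β : List {x // x ∈ S}) : Prop :=
  ∀ i : ℕ, dS S (toElem S (α.take i)) (toElem S (β.take i)) ≤ k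

section Automata

variable {A : Type*}

theorem _root_.NFA.isRegular_accepts {σ : Type*} [Finite σ] (M : NFA A σ) :
    M.accepts.IsRegular := by
  classical
  have := Fintype.ofFinite σ
  exact Language.isRegular_iff.2 ⟨_, inferInstance, M.toDFA, M.toDFA_correct⟩

theorem _root_.NFA.mem_evalFrom_of_forall_mem_step {σ : Type*} {M : NFA A σ} {s : σ}
    (hs : ∀ a, s ∈ M.step s a) {S : Set σ} (hS : s ∈ S) (x : List A) :
    s ∈ M.evalFrom S x := by
  induction x generalizing S with
  | nil => exact hS
  | cons a x ih => exact ih (NFA.mem_stepSet.2 ⟨s, hS, hs a⟩)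

/-- State `j < μ.length` means that the input read so far ends with `μ.take j`; the last state
means that `μ` has occurred. -/
def infixNFA (μ : List A) : NFA A (Fin (μ.length + 1)) where
  step j a := {j' | j' = j ∧ (j = 0 ∨ j = Fin.last _) ∨ μ[(j : ℕ)]? = some a ∧ (j' : ℕ) = j + 1}
  start := {0}
  accept := {Fin.last _}

theorem infixNFA_sound {μ β : List A} {j : Fin (μ.length + 1)}
    (hj : j ∈ (infixNFA μ).eval β) : μ.take j <:+ β ∨ μ <:+: β := by
  induction β using List.reverseRecOn generalizing j with
  | nil =>
    obtain rfl : j = 0 := hj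
    simp
  | append_singleton β a ih =>
    rw [NFA.eval_append_singleton, NFA.mem_stepSet] at hj
    obtain ⟨i, hi, ⟨rfl, rfl | rfl⟩ | ⟨hget, hj⟩⟩ := hj
    · simp
    · right
      have hβ : β <:+: β ++ [a] := List.infix_append [] β [a]
      rcases ih hi with h | h
      · simpa using h.isInfix.trans hβ
      · exact h.trans hβ
    · have hj' : μ.take j = μ.take i ++ [a] := by
        rw [hj, List.take_add_one, hget]; rfl
      rcases ih hi with ⟨t, ht⟩ | h
      · exact Or.inl ⟨t, by rw [hj', ← ht, List.append_assoc]⟩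
      · exact Or.inr (h.trans (List.infix_append [] β [a]))

theorem last_mem_infixNFA_eval {μ β : List A} (h : μ <:+: β) :
    Fin.last _ ∈ (infixNFA μ).eval β := by
  obtain ⟨β₁, β₂, rfl⟩ := h
  have hzero : 0 ∈ (infixNFA μ).eval β₁ :=
    NFA.mem_evalFrom_of_forall_mem_step (M := infixNFA μ)
      (fun _ => Or.inl ⟨rfl, Or.inl rfl⟩) (Set.mem_singleton 0) β₁
  have hprefix : ∀ i (hi : i ≤ μ.length),
      (⟨i, by omega⟩ : Fin _) ∈ (infixNFA μ).evalFrom ((infixNFA μ).eval β₁) (μ.take i) := by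
    intro i hi
    induction i with
    | zero => exact hzero
    | succ i ih =>
      rw [List.take_add_one, List.getElem?_eq_getElem hi, Option.toList_some,
        NFA.evalFrom_append, NFA.evalFrom_singleton, NFA.mem_stepSet]
      exact ⟨_, ih (by omega), Or.inr ⟨List.getElem?_eq_getElem hi, rfl⟩⟩
  rw [NFA.eval, NFA.evalFrom_append, NFA.evalFrom_append]
  refine NFA.mem_evalFrom_of_forall_mem_step (fun _ => Or.inl ⟨rfl, Or.inr rfl⟩) ?_ β₂
  have := hprefix μ.length le_rfl
  rwa [List.take_length] at this

theorem isRegular_setOf_infix (μ : List A) :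
    Language.IsRegular ({β | μ <:+: β} : Language A) := by
  suffices h : (infixNFA μ).accepts = {β | μ <:+: β} from h ▸ (infixNFA μ).isRegular_accepts
  ext β
  refine ⟨?_, fun h => ⟨_, rfl, last_mem_infixNFA_eval h⟩⟩
  rintro ⟨j, rfl, hj⟩
  obtain h | h := infixNFA_sound hj
  · exact (by simpa using h : μ <:+ β).isInfix
  · exact h

end Automata

section Synchronous

variable {A : Type*} (f : A → W) (B : Set W)

def wordDiff (α β : List A) : W := (α.map f).prod⁻¹ * (β.map f).prod

def SyncWithin (α β : List A) : Prop := ∀ i, wordDiff f (α.take i) (β.take i) ∈ B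

theorem wordDiff_concat (α β : List A) (a b : A) :
    wordDiff f (α ++ [a]) (β ++ [b]) = (f a)⁻¹ * wordDiff f α β * f b := by
  simp [wordDiff, mul_assoc]

variable {f B} in
theorem SyncWithin.wordDiff_mem {α β : List A} (h : SyncWithin f B α β)
    (hβ : β.length ≤ α.length) : wordDiff f α β ∈ B := by
  simpa [List.take_of_length_le hβ] using h α.length

variable {f B} in
theorem syncWithin_concat_iff {α β : List A} (h : α.length = β.length) (a b : A) :
    SyncWithin f B (α ++ [a]) (β ++ [b]) ↔
      SyncWithin f B α β ∧ wordDiff f (α ++ [a]) (β ++ [b]) ∈ B := by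
  have hinit : ∀ i ≤ α.length, wordDiff f ((α ++ [a]).take i) ((β ++ [b]).take i) =
      wordDiff f (α.take i) (β.take i) := fun i hi => by
    rw [List.take_append_of_le_length hi, List.take_append_of_le_length (h ▸ hi)]
  have hfull : ∀ i, α.length < i → wordDiff f ((α ++ [a]).take i) ((β ++ [b]).take i) =
      wordDiff f (α ++ [a]) (β ++ [b]) := fun i hi => by
    rw [List.take_of_length_le (by simp; omega), List.take_of_length_le (by simp; omega)]
  constructor
  · intro hsync
    refine ⟨fun i => ?_, hfull _ (Nat.lt_succ_self _) ▸ hsync (α.length + 1)⟩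
    rcases le_total i α.length with hi | hi
    · exact hinit i hi ▸ hsync i
    · rw [List.take_of_length_le hi, List.take_of_length_le (h ▸ hi)]
      simpa [hinit _ le_rfl, h] using hsync α.length
  · rintro ⟨hsync, hlast⟩ i
    rcases le_or_gt i α.length with hi | hi
    · exact hinit i hi ▸ hsync i
    · exact hfull i hi ▸ hlast

variable {σ₁ σ₂ : Type*} (M₁ : DFA A σ₁) (M₂ : DFA A σ₂)

def syncNFA : NFA A (σ₁ × σ₂ × B) where
  step q a := {q' | q'.1 = M₁.step q.1 a ∧
    ∃ b, q'.2.1 = M₂.step q.2.1 b ∧ (q'.2.2 : W) = (f a)⁻¹ * q.2.2 * f b}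
  start := {q | q.1 = M₁.start ∧ q.2.1 = M₂.start ∧ (q.2.2 : W) = 1}
  accept := {q | q.1 ∈ M₁.accept ∧ q.2.1 ∈ M₂.accept ∧ (q.2.2 : W) = 1}

variable {f B M₁ M₂} in
theorem mem_syncNFA_eval {q : σ₁ × σ₂ × B} {α : List A} :
    q ∈ (syncNFA f B M₁ M₂).eval α ↔ ∃ β : List A, β.length = α.length ∧ SyncWithin f B α β ∧
      q.1 = M₁.eval α ∧ q.2.1 = M₂.eval β ∧ (q.2.2 : W) = wordDiff f α β := by
  induction α using List.reverseRecOn generalizing q with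
  | nil =>
    constructor
    · rintro ⟨h₁, h₂, hd⟩
      refine ⟨[], rfl, fun _ => ?_, h₁, h₂, by simp [hd, wordDiff]⟩
      simp [wordDiff, ← hd]
    · rintro ⟨β, hβ, -, h₁, h₂, hd⟩
      obtain rfl := List.eq_nil_of_length_eq_zero hβ
      exact ⟨h₁, h₂, by simp [hd, wordDiff]⟩
  | append_singleton α a ih =>
    rw [NFA.eval_append_singleton, NFA.mem_stepSet, DFA.eval_append_singleton]
    constructor
    · rintro ⟨⟨t₁, t₂, t₃⟩, ht, h₁, b, h₂, hd⟩
      obtain ⟨β, hβ, hsync, rfl, rfl, ht₃⟩ := ih.1 ht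
      have hdiff : (q.2.2 : W) = wordDiff f (α ++ [a]) (β ++ [b]) := by
        rw [hd, ht₃, wordDiff_concat]
      refine ⟨β ++ [b], by simp [hβ], ?_, h₁, by rw [h₂, DFA.eval_append_singleton], hdiff⟩
      exact (syncWithin_concat_iff hβ.symm a b).2 ⟨hsync, hdiff ▸ q.2.2.2⟩
    · rintro ⟨β', hβ', hsync, h₁, h₂, hd⟩
      obtain ⟨β, b, rfl⟩ := (List.eq_nil_or_concat' β').resolve_left (by rintro rfl; simp at hβ')
      have hβ : α.length = β.length := by simpa using hβ'.symm
      obtain ⟨hsync, -⟩ := (syncWithin_concat_iff hβ a b).1 hsync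
      refine ⟨(M₁.eval α, M₂.eval β, ⟨_, hsync.wordDiff_mem hβ.ge⟩),
        ih.2 ⟨β, hβ.symm, hsync, rfl, rfl, rfl⟩, h₁, b,
        by rw [h₂, DFA.eval_append_singleton], by rw [hd, wordDiff_concat]⟩

theorem syncNFA_accepts :
    (syncNFA f B M₁ M₂).accepts = {α | α ∈ M₁.accepts ∧ ∃ β ∈ M₂.accepts,
      β.length = α.length ∧ SyncWithin f B α β ∧ wordDiff f α β = 1} := by
  ext α
  constructor
  · rintro ⟨q, ⟨h₁, h₂, hd⟩, hq⟩
    obtain ⟨β, hβ, hsync, hq₁, hq₂, hq₃⟩ := mem_syncNFA_eval.1 hq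
    exact ⟨by rwa [DFA.mem_accepts, ← hq₁], β, by rwa [DFA.mem_accepts, ← hq₂], hβ, hsync,
      hq₃ ▸ hd⟩
  · rintro ⟨h₁, β, h₂, hβ, hsync, hd⟩
    exact ⟨(M₁.eval α, M₂.eval β, ⟨_, hsync.wordDiff_mem hβ.le⟩), ⟨h₁, h₂, hd⟩,
      mem_syncNFA_eval.2 ⟨β, hβ, hsync, rfl, rfl, rfl⟩⟩

variable {B} in
theorem isRegular_setOf_exists_syncWithin (hB : B.Finite) {L₁ L₂ : Language A}
    (h₁ : L₁.IsRegular) (h₂ : L₂.IsRegular) :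
    Language.IsRegular ({α | α ∈ L₁ ∧ ∃ β ∈ L₂,
      β.length = α.length ∧ SyncWithin f B α β ∧ wordDiff f α β = 1} : Language A) := by
  obtain ⟨σ₁, _, M₁, rfl⟩ := h₁
  obtain ⟨σ₂, _, M₂, rfl⟩ := h₂
  have := hB.to_subtype
  rw [← syncNFA_accepts]
  exact (syncNFA f B M₁ M₂).isRegular_accepts

end Synchronous

section WordMetric

variable (S : Finset W)

@[simp]
theorem toElem_append (α β : List {x // x ∈ S}) :
    toElem S (α ++ β) = toElem S α * toElem S β := by
  simp [toElem]

theorem wlen_toElem_le_length (α : List {x // x ∈ S}) : wlen S (toElem S α) ≤ α.length :=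
  Nat.sInf_le ⟨α, rfl, rfl⟩

variable {S}

theorem exists_toElem_eq (hgen : Subgroup.closure (S : Set W) = ⊤) (hsym : ∀ s ∈ S, s⁻¹ ∈ S)
    (w : W) : ∃ α, toElem S α = w := by
  have hS : (S : Set W) ∪ (S : Set W)⁻¹ = S :=
    Set.union_eq_left.2 fun x hx => by simpa using hsym _ hx
  have hw : w ∈ Submonoid.closure (S : Set W) := by
    rw [← hS, ← Subgroup.closure_toSubmonoid, hgen]
    trivial
  obtain ⟨l, hl, rfl⟩ := Submonoid.exists_list_of_mem_closure hw
  lift l to List {x // x ∈ S} using hl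
  exact ⟨l, rfl⟩

theorem exists_geodesic (hgen : Subgroup.closure (S : Set W) = ⊤) (hsym : ∀ s ∈ S, s⁻¹ ∈ S)
    (w : W) : ∃ α, toElem S α = w ∧ α.length = wlen S w := by
  obtain ⟨α, hα⟩ := exists_toElem_eq hgen hsym w
  exact Nat.sInf_mem (s := {n | ∃ α : List _, toElem S α = w ∧ α.length = n})
    ⟨α.length, α, hα, rfl⟩

theorem wlen_mul_le (hgen : Subgroup.closure (S : Set W) = ⊤) (hsym : ∀ s ∈ S, s⁻¹ ∈ S)
    (u v : W) : wlen S (u * v) ≤ wlen S u + wlen S v := by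
  obtain ⟨α, rfl, hα⟩ := exists_geodesic hgen hsym u
  obtain ⟨β, rfl, hβ⟩ := exists_geodesic hgen hsym v
  simpa [← hα, ← hβ] using wlen_toElem_le_length S (α ++ β)

theorem finite_setOf_wlen_le (hgen : Subgroup.closure (S : Set W) = ⊤)
    (hsym : ∀ s ∈ S, s⁻¹ ∈ S) (k : ℕ) : {w | wlen S w ≤ k}.Finite := by
  refine ((List.finite_length_le _ k).image (toElem S)).subset fun w hw => ?_
  obtain ⟨α, hα, hlen⟩ := exists_geodesic hgen hsym w
  exact ⟨α, hlen.trans_le hw, hα⟩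

end WordMetric

section Factors

variable {S : Finset W}

theorem length_eq_of_mem_Red {α β : List {x // x ∈ S}} (hα : α ∈ Red S) (hβ : β ∈ Red S)
    (h : toElem S α = toElem S β) : α.length = β.length := by
  rw [hα, hβ, h]

theorem exists_mem_Red_infix_iff (hgen : Subgroup.closure (S : Set W) = ⊤)
    (hsym : ∀ s ∈ S, s⁻¹ ∈ S) {μ : List {x // x ∈ S}} (hμ : μ ∈ Red S) (w : W) :
    (∃ β ∈ Red S, μ <:+: β ∧ toElem S β = w) ↔ ∃ u v : W, w = u * toElem S μ * v ∧
      wlen S w = wlen S u + wlen S (toElem S μ) + wlen S v := by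
  have hμ : μ.length = wlen S (toElem S μ) := hμ
  constructor
  · rintro ⟨_, hβ, ⟨β₁, β₂, rfl⟩, rfl⟩
    have hβ : (β₁ ++ μ ++ β₂).length = wlen S (toElem S (β₁ ++ μ ++ β₂)) := hβ
    simp only [List.length_append, toElem_append] at hβ ⊢
    refine ⟨toElem S β₁, toElem S β₂, rfl, le_antisymm ?_ ?_⟩
    · calc _ ≤ wlen S (toElem S β₁ * toElem S μ) + wlen S (toElem S β₂) :=
            wlen_mul_le hgen hsym _ _
        _ ≤ _ := Nat.add_le_add_right (wlen_mul_le hgen hsym _ _) _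
    · have h₁ := wlen_toElem_le_length S β₁
      have h₂ := wlen_toElem_le_length S β₂
      omega
  · rintro ⟨u, v, rfl, hw⟩
    obtain ⟨β₁, rfl, h₁⟩ := exists_geodesic hgen hsym u
    obtain ⟨β₂, rfl, h₂⟩ := exists_geodesic hgen hsym v
    refine ⟨β₁ ++ μ ++ β₂, ?_, List.infix_append _ _ _, by simp only [toElem_append]⟩
    show _ = wlen S _
    simp only [List.length_append, toElem_append]
    omega

end Factors

theorem fellowTravel_iff_syncWithin (S : Finset W) (k : ℕ) (α β : List {x // x ∈ S}) :
    FellowTravel S k α β ↔ SyncWithin Subtype.val {w | wlen S w ≤ k} α β :=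
  Iff.rfl

/-- If `Red(W)` is regular with the `k`-fellow-traveler property, then for any fixed geodesic
word `μ`, the language of geodesic words representing elements of
`X_μ = {w : w = u.μ̄.v}` is regular. -/
theorem red_X_mu_regular (S : Finset W)
    (hgen : Subgroup.closure (S : Set W) = ⊤)
    (hsym : ∀ s ∈ S, s⁻¹ ∈ S) (k : ℕ)
    (hreg : (Red S).IsRegular)
    (hft : ∀ α ∈ Red S, ∀ β ∈ Red S, ∀ t : W, (t ∈ S ∨ t = 1) →
      toElem S α = toElem S β * t → FellowTravel S k α β)
    (μ : List {x // x ∈ S}) (hμ : μ ∈ Red S) :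
    Language.IsRegular
      ({α | α ∈ Red S ∧ toElem S α ∈
          {w : W | ∃ u v : W, w = u * toElem S μ * v ∧
            wlen S w = wlen S u + wlen S (toElem S μ) + wlen S v}} :
        Language {x // x ∈ S}) := by
  refine (congrArg Language.IsRegular ?_).mpr <| isRegular_setOf_exists_syncWithin Subtype.val
    (finite_setOf_wlen_le hgen hsym k) hreg (hreg.inf (isRegular_setOf_infix μ))
  ext α
  simp only [← exists_mem_Red_infix_iff hgen hsym hμ]
  refine and_congr_right fun hα => ⟨?_, ?_⟩
  · rintro ⟨β, hβ, hμβ, heq⟩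
    refine ⟨β, ⟨hβ, hμβ⟩, length_eq_of_mem_Red hβ hα heq, (fellowTravel_iff_syncWithin S k α β).1
      (hft α hα β hβ 1 (Or.inr rfl) (by rw [mul_one, heq])), ?_⟩
    show (toElem S α)⁻¹ * toElem S β = 1
    rw [heq, inv_mul_cancel]
  · rintro ⟨β, ⟨hβ, hμβ⟩, -, -, hd⟩
    exact ⟨β, hβ, hμβ, (inv_mul_eq_one.1 hd).symm⟩

end Stmt5
end
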